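/- arXiv:1508.05534 — 4 statements merged into one kernel-verified Lean document; each statement's English description precedes it below -/
import Mathlib

section
/- Let p be an odd prime and m, n ≥ 0 integers. If p divides m, then N(m,n) = N(m+1, n+1). -/
/-- The set `S_r(m,n)` of solutions of the linear system, encoded as pairs of
finitely supported sequences `(a, b) : (ℕ → ℕ) × (ℕ → ℕ)` where index `i`
(for `0 ≤ i < r`) corresponds to `a_{i+1}`, `b_{i+1}`. -/
def SolSet (p r m n : ℕ) : Set ((ℕ → ℕ) × (ℕ → ℕ)) :=
  {ab | (∀ i, r ≤ i → ab.1 i = 0) ∧ (∀ i, r ≤ i → ab.2 i = 0) ∧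
        (∀ i, ab.2 i ≤ 1) ∧
        2 * (∑ i ∈ Finset.range r, ab.1 i) + ∑ i ∈ Finset.range r, ab.2 i = n ∧
        ab.2 0 + ∑ i ∈ Finset.range r, (ab.1 i + ab.2 (i + 1)) * p ^ (i + 1) = m}

/-- `N_r(m,n)`, the number of solutions of the linear system. -/
noncomputable def Ncard (p r m n : ℕ) : ℕ := Nat.card (SolSet p r m n)

/-- The stable value `N(m,n)` (for `p ≥ 2` one has `p ^ (m+1) > m`, so `r = m + 1`
is in the stable range), with the convention that it vanishes for negative arguments. -/
noncomputable def Nstab (p : ℕ) (m n : ℤ) : ℕ :=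
  if 0 ≤ m ∧ 0 ≤ n then Ncard p (m.toNat + 1) m.toNat n.toNat else 0

/-!
Modulo `p` the defining equation of `S_r(m,n)` reads `b₁ ≡ m`, and `b₁ ∈ {0,1}`, so `b₁ = 0` on
`S_r(m,n)` and `b₁ = 1` on `S_r(m+1,n+1)` when `p ∣ m`. Raising `b₁` from `0` to `1` raises both
`m` and `n` by one, hence is a bijection `S_r(m,n) → S_r(m+1,n+1)`. The two stable values use
`r = m + 1` and `r = m + 2`, which give the same set because `m < p ^ (m + 1)`.
-/

open Finset

namespace SolSet

variable {p r m n : ℕ} {a b : ℕ → ℕ}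

theorem coeff_eq_zero {i : ℕ} (h : (a, b) ∈ SolSet p r m n) (hi : m < p ^ (i + 1)) :
    a i + b (i + 1) = 0 := by
  obtain ⟨ha, hb, -, -, hm⟩ := h
  rcases lt_or_ge i r with hir | hri
  · have hterm : (a i + b (i + 1)) * p ^ (i + 1) ≤ m :=
      (single_le_sum (f := fun j => (a j + b (j + 1)) * p ^ (j + 1))
        (fun _ _ => Nat.zero_le _) (mem_range.mpr hir)).trans (hm ▸ Nat.le_add_left _ _)
    by_contra hne
    have := Nat.le_mul_of_pos_left (p ^ (i + 1)) (Nat.pos_of_ne_zero hne)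
    omega
  · rw [show a i = 0 from ha i hri, show b (i + 1) = 0 from hb _ (by omega)]

theorem snd_zero_eq_mod (hp : 2 ≤ p) (h : (a, b) ∈ SolSet p r m n) : b 0 = m % p := by
  obtain ⟨-, -, hb, -, hm⟩ := h
  obtain ⟨k, hk⟩ := Finset.dvd_sum fun i (_ : i ∈ range r) =>
    (dvd_pow_self p i.succ_ne_zero).mul_left (a i + b (i + 1))
  rw [← hm, hk, Nat.add_mul_mod_self_left, Nat.mod_eq_of_lt (by have := hb 0; omega)]

theorem mem_iff_of_le {r' : ℕ} (hrr : r ≤ r') (ha : ∀ i, r ≤ i → a i = 0)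
    (hb : ∀ i, r ≤ i → b i = 0) : (a, b) ∈ SolSet p r' m n ↔ (a, b) ∈ SolSet p r m n := by
  have hsum : ∀ f : ℕ → ℕ, (∀ i, r ≤ i → f i = 0) → ∑ i ∈ range r', f i = ∑ i ∈ range r, f i :=
    fun f hf =>
      (sum_subset (range_subset_range.mpr hrr) fun i _ hi => hf i (by simpa using hi)).symm
  have hsum' := hsum (fun i => (a i + b (i + 1)) * p ^ (i + 1)) fun i hi => by
    simp [ha i hi, hb (i + 1) (by omega)]
  simp only [SolSet, Set.mem_ofPred_eq, hsum a ha, hsum b hb, hsum']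
  exact ⟨fun h => ⟨ha, hb, h.2.2⟩,
    fun h => ⟨fun i hi => ha i (hrr.trans hi), fun i hi => hb i (hrr.trans hi), h.2.2⟩⟩

theorem eq_of_le {r' : ℕ} (hp : 0 < p) (hr : 0 < r) (hrr : r ≤ r') (hm : m < p ^ r) :
    SolSet p r' m n = SolSet p r m n := by
  ext ⟨a, b⟩
  refine ⟨fun h => ?_, fun h => (mem_iff_of_le hrr h.1 h.2.1).mpr h⟩
  have hvan : ∀ j, r ≤ j + 1 → a j + b (j + 1) = 0 := fun j hj =>
    coeff_eq_zero h (hm.trans_le (Nat.pow_le_pow_right hp hj))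
  refine (mem_iff_of_le hrr (fun i hi => ?_) (fun i hi => ?_)).mp h
  · have := hvan i (by omega); omega
  · obtain ⟨j, rfl⟩ : ∃ j, i = j + 1 := ⟨i - 1, by omega⟩
    have := hvan j hi; omega

theorem add_single_mem_iff (hr : 0 < r) (hb0 : b 0 = 0) :
    (a, b + Pi.single 0 1) ∈ SolSet p r (m + 1) (n + 1) ↔ (a, b) ∈ SolSet p r m n := by
  have hsupp : (∀ i, r ≤ i → (b + Pi.single 0 1 : ℕ → ℕ) i = 0) ↔ ∀ i, r ≤ i → b i = 0 :=
    forall₂_congr fun i hi => by simp [show i ≠ 0 by omega]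
  have hbound : (∀ i, (b + Pi.single 0 1 : ℕ → ℕ) i ≤ 1) ↔ ∀ i, b i ≤ 1 :=
    forall_congr' fun i => by rcases i with _ | i <;> simp [hb0]
  have hsum : ∑ i ∈ range r, (b + Pi.single 0 1 : ℕ → ℕ) i = ∑ i ∈ range r, b i + 1 := by
    simp [sum_add_distrib, hr]
  have hsucc : ∀ i, (b + Pi.single 0 1 : ℕ → ℕ) (i + 1) = b (i + 1) := by simp
  have hzero : (b + Pi.single 0 1 : ℕ → ℕ) 0 = 1 := by simp [hb0]
  simp only [SolSet, Set.mem_ofPred_eq, hsupp, hbound, hsum, hsucc, hzero, hb0]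
  exact and_congr_right' <| and_congr_right' <| and_congr_right' <| and_congr (by omega) (by omega)

end SolSet

theorem Ncard_succ_succ_of_dvd {p r m n : ℕ} (hp : 2 ≤ p) (hr : 0 < r) (hdvd : p ∣ m) :
    Ncard p r (m + 1) (n + 1) = Ncard p r m n := by
  set raise : (ℕ → ℕ) × (ℕ → ℕ) → (ℕ → ℕ) × (ℕ → ℕ) := Prod.map id (· + Pi.single 0 1)
  have hraise : Function.Injective raise := Function.injective_id.prodMap (add_left_injective _)
  suffices himage : SolSet p r (m + 1) (n + 1) = raise '' SolSet p r m n by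
    rw [Ncard, Ncard, himage, Nat.card_image_of_injective hraise]
  apply subset_antisymm
  · rintro ⟨a, b⟩ h
    have hb0 : b 0 = 1 := by
      rw [SolSet.snd_zero_eq_mod hp h, Nat.add_mod, Nat.mod_eq_zero_of_dvd hdvd, zero_add,
        Nat.mod_mod, Nat.one_mod_eq_one.mpr (by omega)]
    have hb : b - Pi.single 0 1 + Pi.single 0 1 = b :=
      tsub_add_cancel_of_le fun i => by rcases i with _ | i <;> simp [hb0]
    exact ⟨(a, b - Pi.single 0 1), (SolSet.add_single_mem_iff hr (by simp [hb0])).mp (hb ▸ h),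
      by simp [raise, hb]⟩
  · rintro _ ⟨⟨a, b⟩, h, rfl⟩
    exact (SolSet.add_single_mem_iff hr
      ((SolSet.snd_zero_eq_mod hp h).trans (Nat.mod_eq_zero_of_dvd hdvd))).mpr h

theorem stmt4_general (p : ℕ) (hp : p.Prime) (m n : ℕ) (hdvd : p ∣ m) :
    Nstab p (m : ℤ) (n : ℤ) = Nstab p ((m : ℤ) + 1) ((n : ℤ) + 1) := by
  have hp2 := hp.two_le
  have hstab : SolSet p (m + 2) m n = SolSet p (m + 1) m n :=
    SolSet.eq_of_le (by omega) m.succ_pos (by omega)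
      ((Nat.lt_pow_self hp2).trans_le (Nat.pow_le_pow_right (by omega) m.le_succ))
  calc Nstab p m n = Ncard p (m + 1) m n := by simp [Nstab]
    _ = Ncard p (m + 2) m n := by rw [Ncard, Ncard, hstab]
    _ = Ncard p (m + 2) (m + 1) (n + 1) := (Ncard_succ_succ_of_dvd hp2 (by omega) hdvd).symm
    _ = Nstab p (m + 1) (n + 1) := by rw [Nstab, if_pos (by omega)]; rfl

/-- for an odd prime `p`, if `p ∣ m` then `N(m,n) = N(m+1, n+1)`. -/
theorem stmt4 (p : ℕ) (hp : p.Prime) (hodd : Odd p) (m n : ℕ) (hdvd : p ∣ m) :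
    Nstab p (m : ℤ) (n : ℤ) = Nstab p ((m : ℤ) + 1) ((n : ℤ) + 1) :=
  stmt4_general p hp m n hdvd
end

section
/- Let p be an odd prime and let n be an integer with 1 ≤ n ≤ 2p − 2. Then for every integer m' ≥ 0 there exist an integer d ≥ 1 and distinct positive integers s_1, …, s_d such that N(m', n) ≤ N(p^{s_1} + p^{s_2} + ⋯ + p^{s_d}, n). Consequently, if the maximum of N(m,n) over all m ∈ ℕ is attained, it is attained at some m of the form m = Σ_{i=1}^d p^{s_i} with distinct positive exponents s_i. -/
open Finset

def digit (p m i : ℕ) : ℕ := m / p ^ i % p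

section Digits

variable {p : ℕ}

lemma digit_zero (m : ℕ) : digit p m 0 = m % p := by
  simp [digit]

lemma digit_succ (m i : ℕ) : digit p m (i + 1) = digit p (m / p) i := by
  rw [digit, digit, pow_succ', Nat.div_div_eq_div_mul]

lemma digit_eq_zero_of_lt_pow {m i : ℕ} (hm : m < p ^ i) : digit p m i = 0 := by
  rw [digit, Nat.div_eq_of_lt hm, Nat.zero_mod]

lemma digit_add_mul_zero {c : ℕ} (hc : c < p) (y : ℕ) : digit p (c + p * y) 0 = c := by
  rw [digit_zero, Nat.add_mul_mod_self_left, Nat.mod_eq_of_lt hc]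

lemma digit_add_mul_succ {c : ℕ} (hc : c < p) (y i : ℕ) :
    digit p (c + p * y) (i + 1) = digit p y i := by
  rw [digit_succ, Nat.add_mul_div_left _ _ (by omega), Nat.div_eq_of_lt hc, zero_add]

lemma digit_sum_mul_pow {r : ℕ} {c : ℕ → ℕ} (hc : ∀ t < r, c t < p) (i : ℕ) :
    digit p (∑ t ∈ range r, c t * p ^ t) i = if i < r then c i else 0 := by
  induction r generalizing c i with
  | zero => simp [digit]
  | succ r ih =>
    have hsplit : ∑ t ∈ range (r + 1), c t * p ^ t
        = c 0 + p * ∑ t ∈ range r, c (t + 1) * p ^ t := by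
      rw [sum_range_succ', mul_sum, add_comm]
      simp only [pow_succ, pow_zero, mul_one]
      congr 1
      exact sum_congr rfl fun t _ => by ring
    have hc0 : c 0 < p := hc 0 (by omega)
    rw [hsplit]
    cases i with
    | zero => simp [digit_add_mul_zero hc0]
    | succ i =>
      rw [digit_add_mul_succ hc0, ih fun t ht => hc (t + 1) (by omega)]
      simp

lemma sum_digit_mul_pow {r m : ℕ} (hm : m < p ^ r) :
    ∑ i ∈ range r, digit p m i * p ^ i = m := by
  induction r generalizing m with
  | zero => simp_all
  | succ r ih =>
    have hq : m / p < p ^ r := Nat.div_lt_of_lt_mul (by rwa [← pow_succ'])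
    calc ∑ i ∈ range (r + 1), digit p m i * p ^ i
        = p * ∑ i ∈ range r, digit p (m / p) i * p ^ i + m % p := by
          rw [sum_range_succ', mul_sum, digit_zero]
          simp only [digit_succ, pow_succ, pow_zero, mul_one]
          congr 1
          exact sum_congr rfl fun i _ => by ring
      _ = m := by rw [ih hq, Nat.div_add_mod]

end Digits

lemma sum_range_eq_add_sum_range_succ {f : ℕ → ℕ} {r : ℕ} (hf : f r = 0) :
    ∑ i ∈ range r, f i = f 0 + ∑ i ∈ range r, f (i + 1) := by
  have h₁ := sum_range_succ f r
  have h₂ := sum_range_succ' f r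
  omega

def nonzeroDigits (p r m : ℕ) : Finset ℕ := (range r).filter fun i => digit p m (i + 1) ≠ 0

def digitSum (p r m : ℕ) : ℕ := ∑ i ∈ range r, digit p m (i + 1)

lemma card_nonzeroDigits_le_digitSum (p r m : ℕ) :
    (nonzeroDigits p r m).card ≤ digitSum p r m := by
  calc (nonzeroDigits p r m).card = (nonzeroDigits p r m).card • 1 := by rw [smul_eq_mul, mul_one]
    _ ≤ ∑ i ∈ nonzeroDigits p r m, digit p m (i + 1) :=
        card_nsmul_le_sum _ _ _ fun i hi => Nat.one_le_iff_ne_zero.2 (mem_filter.1 hi).2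
    _ = digitSum p r m := sum_filter_ne_zero _

def shape (r : ℕ) (ab : (ℕ → ℕ) × (ℕ → ℕ)) : Finset ℕ :=
  (range r).filter fun i => ab.2 (i + 1) = 1

section UpperBound

variable {p r m n : ℕ} {ab : (ℕ → ℕ) × (ℕ → ℕ)}

lemma sum_snd_eq_of_mem_solSet (hab : ab ∈ SolSet p r m n) :
    ∑ i ∈ range r, ab.2 i = ab.2 0 + ∑ i ∈ range r, ab.2 (i + 1) :=
  sum_range_eq_add_sum_range_succ (hab.2.1 r le_rfl)

lemma digit_eq_of_mem_solSet (hn : n + 2 ≤ 2 * p) (hab : ab ∈ SolSet p r m n) :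
    digit p m 0 = ab.2 0 ∧ ∀ i < r, digit p m (i + 1) = ab.1 i + ab.2 (i + 1) := by
  have hshift := sum_snd_eq_of_mem_solSet hab
  obtain ⟨-, -, hb1, hcount, hm⟩ := hab
  have hlt : ∀ i < r, ab.1 i + ab.2 (i + 1) < p := by
    intro i hi
    have ha := single_le_sum (f := ab.1) (fun _ _ => Nat.zero_le _) (mem_range.2 hi)
    have hb := single_le_sum (f := fun j => ab.2 (j + 1)) (fun _ _ => Nat.zero_le _)
      (mem_range.2 hi)
    have := hb1 (i + 1)
    omega
  have hb0 : ab.2 0 < p := by have := hb1 0; omega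
  have hm' : m = ab.2 0 + p * ∑ i ∈ range r, (ab.1 i + ab.2 (i + 1)) * p ^ i := by
    rw [← hm, mul_sum]
    exact congrArg _ (sum_congr rfl fun i _ => by ring)
  refine ⟨by rw [hm', digit_add_mul_zero hb0], fun i hi => ?_⟩
  rw [hm', digit_add_mul_succ hb0, digit_sum_mul_pow hlt, if_pos hi]

lemma shape_mem_powersetCard (hn : n + 2 ≤ 2 * p) (hab : ab ∈ SolSet p r m n) :
    shape r ab ∈ powersetCard (2 * digitSum p r m + digit p m 0 - n) (nonzeroDigits p r m) := by
  obtain ⟨hd0, hd⟩ := digit_eq_of_mem_solSet hn hab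
  have hshift := sum_snd_eq_of_mem_solSet hab
  obtain ⟨-, -, hb1, hcount, -⟩ := hab
  refine mem_powersetCard.2 ⟨fun i hi => ?_, ?_⟩
  · obtain ⟨hi, hbi⟩ := mem_filter.1 hi
    exact mem_filter.2 ⟨hi, by rw [hd i (mem_range.1 hi)]; omega⟩
  · have hcard : (shape r ab).card = ∑ i ∈ range r, ab.2 (i + 1) := by
      rw [shape, card_filter]
      exact sum_congr rfl fun i _ => by have := hb1 (i + 1); split <;> omega
    have hsum : digitSum p r m = ∑ i ∈ range r, ab.1 i + ∑ i ∈ range r, ab.2 (i + 1) := by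
      rw [digitSum, ← sum_add_distrib]
      exact sum_congr rfl fun i hi => hd i (mem_range.1 hi)
    omega

lemma injOn_shape (hn : n + 2 ≤ 2 * p) : Set.InjOn (shape r) (SolSet p r m n) := by
  intro ab hab ab' hab' heq
  obtain ⟨hd0, hd⟩ := digit_eq_of_mem_solSet hn hab
  obtain ⟨hd0', hd'⟩ := digit_eq_of_mem_solSet hn hab'
  obtain ⟨ha, hb, hb1, -, -⟩ := hab
  obtain ⟨ha', hb', hb1', -, -⟩ := hab'
  have hsnd : ab.2 = ab'.2 := by
    funext j
    rcases j with _ | i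
    · omega
    by_cases hi : i < r
    · have hmem := congrArg (i ∈ ·) heq
      simp only [shape, mem_filter, mem_range, hi, true_and, eq_iff_iff] at hmem
      have := hb1 (i + 1)
      have := hb1' (i + 1)
      omega
    · rw [hb (i + 1) (by omega), hb' (i + 1) (by omega)]
  refine Prod.ext (funext fun i => ?_) hsnd
  by_cases hi : i < r
  · have := hd i hi
    have := hd' i hi
    rw [hsnd] at *
    omega
  · rw [ha i (by omega), ha' i (by omega)]

lemma finite_solSet (hn : n + 2 ≤ 2 * p) : (SolSet p r m n).Finite :=
  Set.Finite.of_finite_image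
    ((powersetCard (2 * digitSum p r m + digit p m 0 - n) (nonzeroDigits p r m)).finite_toSet.subset
      (Set.image_subset_iff.2 fun _ hab => shape_mem_powersetCard hn hab))
    (injOn_shape hn)

lemma Ncard_le_choose (hn : n + 2 ≤ 2 * p) :
    Ncard p r m n ≤ (nonzeroDigits p r m).card.choose (2 * digitSum p r m + digit p m 0 - n) := by
  rw [← card_powersetCard, ← Set.ncard_coe_finset]
  exact Set.ncard_le_ncard_of_injOn _ (fun _ hab => shape_mem_powersetCard hn hab)
    (injOn_shape hn)

end UpperBound

def ofShape (p r m : ℕ) (B : Finset ℕ) : (ℕ → ℕ) × (ℕ → ℕ) :=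
  (fun i => if i < r then digit p m (i + 1) - if i ∈ B then 1 else 0 else 0,
   fun j => match j with
    | 0 => digit p m 0
    | j + 1 => if j ∈ B then 1 else 0)

lemma ofShape_injective (p r m : ℕ) : Function.Injective (ofShape p r m) := by
  intro B B' h
  ext i
  have hi : (if i ∈ B then 1 else 0 : ℕ) = if i ∈ B' then 1 else 0 :=
    congrArg (fun ab => ab.2 (i + 1)) h
  split_ifs at hi <;> simp_all

section LowerBound

variable {p r m n : ℕ} {B : Finset ℕ}

lemma succ_lt_of_mem_nonzeroDigits {i : ℕ} (hp : 0 < p) (hm : m < p ^ r)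
    (hi : i ∈ nonzeroDigits p r m) : i + 1 < r := by
  by_contra h
  exact (mem_filter.1 hi).2
    (digit_eq_zero_of_lt_pow (hm.trans_le (Nat.pow_le_pow_right hp (by omega))))

lemma fst_ofShape_add_ite {i : ℕ} (hBD : B ⊆ nonzeroDigits p r m) (hi : i < r) :
    (ofShape p r m B).1 i + (if i ∈ B then 1 else 0) = digit p m (i + 1) := by
  simp only [ofShape, if_pos hi]
  split_ifs with hiB
  · have := (mem_filter.1 (hBD hiB)).2
    omega
  · omega

lemma ofShape_mem_solSet (hp : 0 < p) (hm : m < p ^ r) (hc0 : digit p m 0 ≤ 1)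
    (hnS : n ≤ 2 * digitSum p r m + digit p m 0)
    (hB : B ∈ powersetCard (2 * digitSum p r m + digit p m 0 - n) (nonzeroDigits p r m)) :
    ofShape p r m B ∈ SolSet p r m n := by
  obtain ⟨hBD, hcard⟩ := mem_powersetCard.1 hB
  have hBr : ∀ i ∈ B, i + 1 < r := fun i hi => succ_lt_of_mem_nonzeroDigits hp hm (hBD hi)
  have hsnd : ∀ i, (ofShape p r m B).2 (i + 1) = if i ∈ B then 1 else 0 := fun _ => rfl
  have hsnd_eq_zero : ∀ j, r ≤ j → (ofShape p r m B).2 j = 0 := by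
    rintro (_ | j) hj
    · obtain rfl : r = 0 := by omega
      exact digit_eq_zero_of_lt_pow hm
    · rw [hsnd, if_neg fun hjB => by have := hBr j hjB; omega]
  have hcard_eq_sum : B.card = ∑ i ∈ range r, if i ∈ B then 1 else 0 := by
    rw [sum_ite_mem, inter_eq_right.2 fun i hi => mem_range.2 (by have := hBr i hi; omega),
      card_eq_sum_ones]
  have hsum_fst : ∑ i ∈ range r, (ofShape p r m B).1 i + B.card = digitSum p r m := by
    rw [hcard_eq_sum, ← sum_add_distrib]
    exact sum_congr rfl fun i hi => fst_ofShape_add_ite hBD (mem_range.1 hi)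
  have hsum_snd : ∑ i ∈ range r, (ofShape p r m B).2 i = digit p m 0 + B.card := by
    rw [sum_range_eq_add_sum_range_succ (hsnd_eq_zero r le_rfl), hcard_eq_sum]
    rfl
  refine ⟨fun i hi => if_neg (by omega), hsnd_eq_zero, ?_, by omega, ?_⟩
  · rintro (_ | j)
    · exact hc0
    · rw [hsnd]
      split <;> omega
  · have hm' := sum_digit_mul_pow (hm.trans_le (Nat.pow_le_pow_right hp (Nat.le_succ r)))
    rw [sum_range_succ', pow_zero, mul_one] at hm'
    have hterm : ∀ i ∈ range r,
        ((ofShape p r m B).1 i + (ofShape p r m B).2 (i + 1)) * p ^ (i + 1)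
          = digit p m (i + 1) * p ^ (i + 1) := fun i hi => by
      rw [hsnd, fst_ofShape_add_ite hBD (mem_range.1 hi)]
    rw [sum_congr rfl hterm]
    exact (add_comm _ _).trans hm'

lemma choose_le_Ncard (hn : n + 2 ≤ 2 * p) (hm : m < p ^ r) (hc0 : digit p m 0 ≤ 1)
    (hnS : n ≤ 2 * digitSum p r m + digit p m 0) :
    (nonzeroDigits p r m).card.choose (2 * digitSum p r m + digit p m 0 - n) ≤ Ncard p r m n := by
  rw [← card_powersetCard, ← Set.ncard_coe_finset]
  exact Set.ncard_le_ncard_of_injOn _ (fun _ hB => ofShape_mem_solSet (by omega) hm hc0 hnS hB)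
    (ofShape_injective p r m).injOn (finite_solSet hn)

end LowerBound

lemma exists_choose_le_choose {k T n : ℕ} (hn : 1 ≤ n) (h : 2 * k ≤ n + T) :
    ∃ d, 1 ≤ d ∧ n ≤ 2 * d ∧ k.choose T ≤ d.choose (2 * d - n) := by
  by_cases hT : T ≤ k
  · refine ⟨n + T - k, by omega, by omega, ?_⟩
    calc k.choose T = k.choose (k - T) := (Nat.choose_symm hT).symm
      _ ≤ (n + T - k).choose (k - T) := Nat.choose_le_choose _ (by omega)
      _ = (n + T - k).choose (2 * (n + T - k) - n) := by
        rw [← Nat.choose_symm (by omega)]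
        congr 1
        omega
  · exact ⟨n, hn, by omega, by simp [Nat.choose_eq_zero_of_lt (not_le.1 hT)]⟩

section PowerSums

variable {p : ℕ}

lemma sum_pow_succ_eq_zero_add_mul (d : ℕ) :
    ∑ t ∈ range d, p ^ (t + 1) = 0 + p * ∑ t ∈ range d, 1 * p ^ t := by
  simp only [mul_sum, pow_succ', one_mul, zero_add]

lemma digit_sum_pow_succ_zero (hp : 0 < p) (d : ℕ) :
    digit p (∑ t ∈ range d, p ^ (t + 1)) 0 = 0 := by
  rw [sum_pow_succ_eq_zero_add_mul, digit_add_mul_zero hp]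

lemma digit_sum_pow_succ_succ (hp : 1 < p) (d i : ℕ) :
    digit p (∑ t ∈ range d, p ^ (t + 1)) (i + 1) = if i < d then 1 else 0 := by
  rw [sum_pow_succ_eq_zero_add_mul, digit_add_mul_succ (by omega), digit_sum_mul_pow fun _ _ => hp]

lemma nonzeroDigits_sum_pow_succ (hp : 1 < p) {d r : ℕ} (hdr : d ≤ r) :
    nonzeroDigits p r (∑ t ∈ range d, p ^ (t + 1)) = range d := by
  ext i
  simp only [nonzeroDigits, mem_filter, mem_range, digit_sum_pow_succ_succ hp]
  split <;> omega

lemma digitSum_sum_pow_succ (hp : 1 < p) {d r : ℕ} (hdr : d ≤ r) :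
    digitSum p r (∑ t ∈ range d, p ^ (t + 1)) = d := by
  have hfilter : (range r).filter (· < d) = range d := by
    ext i
    simp only [mem_filter, mem_range]
    omega
  simp only [digitSum, digit_sum_pow_succ_succ hp, sum_boole, Nat.cast_id, hfilter, card_range]

lemma le_sum_pow_succ (hp : 0 < p) (d : ℕ) : d ≤ ∑ t ∈ range d, p ^ (t + 1) := by
  simpa using card_nsmul_le_sum (range d) (fun t => p ^ (t + 1)) 1 fun t _ => Nat.one_le_pow _ _ hp

lemma choose_le_Ncard_sum_pow_succ {n d : ℕ} (hp : 1 < p) (hn : n + 2 ≤ 2 * p)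
    (hnd : n ≤ 2 * d) :
    d.choose (2 * d - n) ≤
      Ncard p (∑ t ∈ range d, p ^ (t + 1) + 1) (∑ t ∈ range d, p ^ (t + 1)) n := by
  set M := ∑ t ∈ range d, p ^ (t + 1)
  have hdr : d ≤ M + 1 := (le_sum_pow_succ (by omega) d).trans (Nat.le_succ M)
  have hM : M < p ^ (M + 1) :=
    (Nat.lt_pow_self hp).trans_le (Nat.pow_le_pow_right (by omega) M.le_succ)
  have h := choose_le_Ncard (r := M + 1) hn hM (by rw [digit_sum_pow_succ_zero (by omega)]; omega)
    (by rw [digitSum_sum_pow_succ hp hdr]; omega)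
  rwa [nonzeroDigits_sum_pow_succ hp hdr, digitSum_sum_pow_succ hp hdr,
    digit_sum_pow_succ_zero (by omega), card_range, add_zero] at h

end PowerSums

theorem exists_Ncard_le_Ncard_sum_pow_succ {p n : ℕ} (hp : 1 < p) (hn1 : 1 ≤ n)
    (hn : n + 2 ≤ 2 * p) (m : ℕ) :
    ∃ d, 1 ≤ d ∧ Ncard p (m + 1) m n ≤
      Ncard p (∑ t ∈ range d, p ^ (t + 1) + 1) (∑ t ∈ range d, p ^ (t + 1)) n := by
  obtain ⟨d, hd, hnd, hle⟩ := exists_choose_le_choose hn1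
    (k := (nonzeroDigits p (m + 1) m).card) (T := 2 * digitSum p (m + 1) m + digit p m 0 - n)
    (by have := card_nonzeroDigits_le_digitSum p (m + 1) m; omega)
  exact ⟨d, hd, (Ncard_le_choose hn).trans (hle.trans (choose_le_Ncard_sum_pow_succ hp hn hnd))⟩

lemma Nstab_natCast (p m n : ℕ) : Nstab p m n = Ncard p (m + 1) m n := by
  simp [Nstab]

theorem stmt9_general (p : ℕ) (hp : p.Prime) (n : ℕ) (hn1 : 1 ≤ n)
    (hn2 : n ≤ 2 * p - 2) :
    (∀ m' : ℕ, ∃ d : ℕ, 1 ≤ d ∧ ∃ s : Fin d → ℕ, (∀ i, 1 ≤ s i) ∧ Function.Injective s ∧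
        Nstab p (m' : ℤ) (n : ℤ) ≤ Nstab p (∑ i, (p : ℤ) ^ (s i)) (n : ℤ)) ∧
    (∀ m₀ : ℕ, (∀ m : ℕ, Nstab p (m : ℤ) (n : ℤ) ≤ Nstab p (m₀ : ℤ) (n : ℤ)) →
      ∃ d : ℕ, 1 ≤ d ∧ ∃ s : Fin d → ℕ, (∀ i, 1 ≤ s i) ∧ Function.Injective s ∧
        ∀ m : ℕ, Nstab p (m : ℤ) (n : ℤ) ≤ Nstab p (∑ i, (p : ℤ) ^ (s i)) (n : ℤ)) := by
  have hp2 := hp.two_le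
  have dominated : ∀ m' : ℕ, ∃ d : ℕ, 1 ≤ d ∧ ∃ s : Fin d → ℕ, (∀ i, 1 ≤ s i) ∧
      Function.Injective s ∧ Nstab p m' n ≤ Nstab p (∑ i, (p : ℤ) ^ (s i)) n := by
    intro m'
    obtain ⟨d, hd, hle⟩ := exists_Ncard_le_Ncard_sum_pow_succ hp2 hn1 (by omega) m'
    refine ⟨d, hd, fun i => i + 1, fun _ => Nat.le_add_left 1 _,
      fun _ _ h => Fin.ext (Nat.succ_injective h), ?_⟩
    have hsum : ∑ i : Fin d, (p : ℤ) ^ ((i : ℕ) + 1)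
        = ((∑ t ∈ range d, p ^ (t + 1) : ℕ) : ℤ) := by
      push_cast
      exact Fin.sum_univ_eq_sum_range (fun t => (p : ℤ) ^ (t + 1)) d
    rwa [hsum, Nstab_natCast, Nstab_natCast]
  refine ⟨dominated, fun m₀ hm₀ => ?_⟩
  obtain ⟨d, hd, s, hs, hinj, hle⟩ := dominated m₀
  exact ⟨d, hd, s, hs, hinj, fun m => (hm₀ m).trans hle⟩

/-- for an odd prime `p` and `1 ≤ n ≤ 2p - 2`, every value `N(m',n)` is
dominated by `N(m,n)` for some `m = Σ_{i=1}^d p^{s_i}` with `d ≥ 1` and distinct positive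
exponents `s_i`; consequently, if the maximum of `N(·,n)` is attained, it is attained at
a number of this form. -/
theorem stmt9 (p : ℕ) (hp : p.Prime) (hodd : Odd p) (n : ℕ) (hn1 : 1 ≤ n)
    (hn2 : n ≤ 2 * p - 2) :
    (∀ m' : ℕ, ∃ d : ℕ, 1 ≤ d ∧ ∃ s : Fin d → ℕ, (∀ i, 1 ≤ s i) ∧ Function.Injective s ∧
        Nstab p (m' : ℤ) (n : ℤ) ≤ Nstab p (∑ i, (p : ℤ) ^ (s i)) (n : ℤ)) ∧
    (∀ m₀ : ℕ, (∀ m : ℕ, Nstab p (m : ℤ) (n : ℤ) ≤ Nstab p (m₀ : ℤ) (n : ℤ)) →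
      ∃ d : ℕ, 1 ≤ d ∧ ∃ s : Fin d → ℕ, (∀ i, 1 ≤ s i) ∧ Function.Injective s ∧
        ∀ m : ℕ, Nstab p (m : ℤ) (n : ℤ) ≤ Nstab p (∑ i, (p : ℤ) ^ (s i)) (n : ℤ)) :=
  stmt9_general p hp n hn1 hn2
end

section
/- Let p be a prime and d = (d_1, d_2, …) a sequence of positive integers. Then for every integer n ≥ 1 and all integers m ≥ 0 and r ≥ 1, N_r^d(m,n) ≤ n · 4^n · e^{2πn/√3}. -/
/-- The set of solutions of the extended linear system, where `b_i ∈ {0, d_i}`: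
pairs of finitely supported sequences `(a, b)` in which index `i` (for `0 ≤ i < r`)
corresponds to `a_{i+1}`, `b_{i+1}`, and `d : ℕ → ℕ` with `d i` corresponding to `d_{i+1}`. -/
def SolSetD (p : ℕ) (d : ℕ → ℕ) (r m n : ℕ) : Set ((ℕ → ℕ) × (ℕ → ℕ)) :=
  {ab | (∀ i, r ≤ i → ab.1 i = 0) ∧ (∀ i, r ≤ i → ab.2 i = 0) ∧
        (∀ i, i < r → ab.2 i = 0 ∨ ab.2 i = d i) ∧
        2 * (∑ i ∈ Finset.range r, ab.1 i) + ∑ i ∈ Finset.range r, ab.2 i = n ∧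
        ab.2 0 + ∑ i ∈ Finset.range r, (ab.1 i + ab.2 (i + 1)) * p ^ (i + 1) = m}

/-- `N_r^d(m,n)`, the number of solutions of the extended linear system. -/
noncomputable def NcardD (p : ℕ) (d : ℕ → ℕ) (r m n : ℕ) : ℕ := Nat.card (SolSetD p d r m n)

/-!
A solution `(a, b)` yields the representation `m = ∑_{i ≤ r} c_i p^i` with `c_0 = b_1`,
`c_i = a_i + b_{i+1}` and `c_r = a_r`, whose coefficient sum `∑ a + ∑ b` is at most `n`. The
solution is recovered from `c` and the set of indices with `b_i ≠ 0`, a subset of the support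
of `c`, which has at most `n` elements; so it suffices to show that `m` has at most `4^n` such
representations. These are counted from the top coefficient down: if `c_N = j`, the rest
represents `M - j p^N`, and its top quotient `⌊M / p^(N-1)⌋ - j p` is at least
`2 (⌊M / p^N⌋ - j)`. Hence a potential `4^s · w(⌊M / p^N⌋)`, geometric in the top quotient,
is preserved, giving `N_r^d(m,n) ≤ 8^n`, far below the claimed bound.
-/

open Finset

def powSumReprs (p N M s : ℕ) : Finset (Fin (N + 1) → ℕ) :=
  (Fintype.piFinset fun _ => range (s + 1)).filter
    fun c => ∑ i, c i * p ^ (i : ℕ) = M ∧ ∑ i, c i ≤ s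

lemma mem_powSumReprs {p N M s : ℕ} {c : Fin (N + 1) → ℕ} :
    c ∈ powSumReprs p N M s ↔ ∑ i, c i * p ^ (i : ℕ) = M ∧ ∑ i, c i ≤ s := by
  simp only [powSumReprs, mem_filter, Fintype.mem_piFinset, mem_range, and_iff_right_iff_imp]
  exact fun ⟨_, hs⟩ i => Nat.lt_succ_of_le ((single_le_sum (fun _ _ => Nat.zero_le _)
    (mem_univ i)).trans hs)

lemma mem_powSumReprs_zero {p M s : ℕ} {c : Fin 1 → ℕ} :
    c ∈ powSumReprs p 0 M s ↔ c 0 = M ∧ M ≤ s := by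
  simp only [mem_powSumReprs, Fin.sum_univ_succ, Fin.sum_univ_zero, Fin.val_zero, pow_zero,
    mul_one, add_zero]
  exact ⟨fun ⟨h, hs⟩ => ⟨h, h ▸ hs⟩, fun ⟨h, hs⟩ => ⟨h, h ▸ hs⟩⟩

-- The factor `2` for a nonzero top quotient pays for the branches where the top coefficient
-- is not maximal.
noncomputable def reprWeight (D : ℕ) : ℝ := (if D = 0 then 1 else 2) * 4⁻¹ ^ D

lemma reprWeight_nonneg (D : ℕ) : 0 ≤ reprWeight D := by
  unfold reprWeight; positivity

lemma inv_four_pow_le_reprWeight (D : ℕ) : (4⁻¹ : ℝ) ^ D ≤ reprWeight D := by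
  unfold reprWeight; split_ifs <;> nlinarith [pow_nonneg (by norm_num : (0 : ℝ) ≤ 4⁻¹) D]

lemma reprWeight_le_two_mul (D : ℕ) : reprWeight D ≤ 2 * 4⁻¹ ^ D := by
  unfold reprWeight; split_ifs <;> nlinarith [pow_nonneg (by norm_num : (0 : ℝ) ≤ 4⁻¹) D]

lemma reprWeight_le_one (D : ℕ) : reprWeight D ≤ 1 := by
  unfold reprWeight
  split_ifs with hD
  · simp [hD]
  · calc (2 : ℝ) * 4⁻¹ ^ D ≤ 2 * 4⁻¹ ^ 1 :=
          mul_le_mul_of_nonneg_left (pow_le_pow_of_le_one (by norm_num) (by norm_num)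
            (Nat.one_le_iff_ne_zero.mpr hD)) zero_le_two
      _ ≤ 1 := by norm_num

lemma sum_range_inv_four_pow_succ (D : ℕ) :
    ∑ i ∈ range D, (4⁻¹ : ℝ) ^ (i + 1) = (1 - 4⁻¹ ^ D) / 3 := by
  induction D with
  | zero => simp
  | succ D ih => rw [sum_range_succ, ih]; ring

lemma sum_range_inv_four_pow_sub_le (D : ℕ) : ∑ j ∈ range D, (4⁻¹ : ℝ) ^ (D - j) ≤ 1 / 3 := by
  have hreflect := sum_range_reflect (fun i => (4⁻¹ : ℝ) ^ (i + 1)) D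
  rw [sum_range_inv_four_pow_succ] at hreflect
  rw [← sum_congr rfl fun j hj => by
    rw [show D - j = D - 1 - j + 1 by have := mem_range.mp hj; omega], hreflect]
  linarith [pow_nonneg (by norm_num : (0 : ℝ) ≤ 4⁻¹) D]

lemma reprWeight_sub_mul_le {p Q j : ℕ} (hp : 2 ≤ p) (hj : j < Q / p) :
    reprWeight (Q - j * p) * 4⁻¹ ^ j ≤ 2 * 4⁻¹ ^ (Q / p) * 4⁻¹ ^ (Q / p - j) := by
  set D := Q / p
  have hexp : D + (D - j) ≤ Q - j * p + j := by
    have hDQ : D * p ≤ Q := Nat.div_mul_le_self Q p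
    have : j * p + (D - j) * 2 ≤ D * p := by
      calc j * p + (D - j) * 2 ≤ j * p + (D - j) * p := by gcongr
        _ = D * p := by rw [← add_mul]; congr 1; omega
    omega
  calc reprWeight (Q - j * p) * 4⁻¹ ^ j ≤ 2 * 4⁻¹ ^ (Q - j * p) * 4⁻¹ ^ j := by
        gcongr; exact reprWeight_le_two_mul _
    _ = 2 * 4⁻¹ ^ (Q - j * p + j) := by rw [pow_add]; ring
    _ ≤ 2 * 4⁻¹ ^ (D + (D - j)) :=
        mul_le_mul_of_nonneg_left (pow_le_pow_of_le_one (by norm_num) (by norm_num) hexp)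
          zero_le_two
    _ = 2 * 4⁻¹ ^ D * 4⁻¹ ^ (D - j) := by rw [pow_add]; ring

lemma sum_reprWeight_le {p : ℕ} (hp : 2 ≤ p) (Q : ℕ) :
    ∑ j ∈ range (Q / p + 1), reprWeight (Q - j * p) * 4⁻¹ ^ j ≤ reprWeight (Q / p) := by
  set D := Q / p
  rcases Nat.eq_zero_or_pos D with h0 | hpos
  · simpa [h0, reprWeight] using reprWeight_le_one Q
  calc ∑ j ∈ range (D + 1), reprWeight (Q - j * p) * 4⁻¹ ^ j
      = ∑ j ∈ range D, reprWeight (Q - j * p) * 4⁻¹ ^ j + reprWeight (Q - D * p) * 4⁻¹ ^ D :=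
        sum_range_succ _ _
    _ ≤ ∑ j ∈ range D, 2 * 4⁻¹ ^ D * 4⁻¹ ^ (D - j) + 1 * 4⁻¹ ^ D :=
        add_le_add (sum_le_sum fun j hj => reprWeight_sub_mul_le hp (mem_range.mp hj))
          (by gcongr; exact reprWeight_le_one _)
    _ = 4⁻¹ ^ D * (2 * ∑ j ∈ range D, (4⁻¹ : ℝ) ^ (D - j) + 1) := by
        rw [mul_add, mul_sum, mul_sum]
        congr 1
        · exact sum_congr rfl fun _ _ => by ring
        · ring
    _ ≤ 4⁻¹ ^ D * (2 * (1 / 3) + 1) := by gcongr; exact sum_range_inv_four_pow_sub_le D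
    _ ≤ reprWeight D := by
        rw [reprWeight, if_neg hpos.ne']; nlinarith [pow_nonneg (by norm_num : (0 : ℝ) ≤ 4⁻¹) D]

lemma card_powSumReprs_zero_le (p M s : ℕ) :
    ((powSumReprs p 0 M s).card : ℝ) ≤ 4 ^ s * reprWeight M := by
  by_cases hMs : M ≤ s
  · have hcard : (powSumReprs p 0 M s).card ≤ 1 := card_le_one.mpr fun c hc c' hc' =>
      funext fun i => by
        rw [Fin.fin_one_eq_zero i, (mem_powSumReprs_zero.mp hc).1, (mem_powSumReprs_zero.mp hc').1]
    calc ((powSumReprs p 0 M s).card : ℝ) ≤ 4 ^ M * 4⁻¹ ^ M := by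
          rw [← mul_pow]; norm_num; exact_mod_cast hcard
      _ ≤ 4 ^ s * reprWeight M := by
          gcongr
          · norm_num
          · exact inv_four_pow_le_reprWeight M
  · have hempty : powSumReprs p 0 M s = ∅ :=
      eq_empty_of_forall_notMem fun c hc => hMs (mem_powSumReprs_zero.mp hc).2
    rw [hempty, card_empty, CharP.cast_eq_zero]
    exact mul_nonneg (by positivity) (reprWeight_nonneg M)

lemma card_powSumReprs_succ_le {p : ℕ} (hp : 0 < p) (N M s : ℕ) :
    (powSumReprs p (N + 1) M s).card ≤ ∑ j ∈ (range (M / p ^ (N + 1) + 1)).filter (· ≤ s),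
      (powSumReprs p N (M - j * p ^ (N + 1)) (s - j)).card := by
  rw [← card_sigma]
  refine card_le_card_of_injOn (fun c => ⟨c (Fin.last _), Fin.init c⟩) ?_ ?_
  · intro c hc
    obtain ⟨hM, hs⟩ := mem_powSumReprs.mp hc
    rw [Fin.sum_univ_castSucc] at hM hs
    simp only [Fin.val_last, Fin.val_castSucc] at hM
    have hj : c (Fin.last _) * p ^ (N + 1) ≤ M := by omega
    simp only [coe_sigma, Set.mem_sigma_iff, coe_filter, mem_range, Set.mem_ofPred_eq,
      mem_coe, mem_powSumReprs]
    refine ⟨⟨Nat.lt_succ_of_le ((Nat.le_div_iff_mul_le (by positivity)).mpr hj), by omega⟩,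
      ?_, ?_⟩ <;> simp only [Fin.init] <;> omega
  · intro c _ c' _ h
    simp only [Sigma.mk.inj_iff, heq_eq_eq] at h
    rw [← Fin.snoc_init_self c, ← Fin.snoc_init_self c', h.1, h.2]

theorem card_powSumReprs_le_reprWeight {p : ℕ} (hp : 2 ≤ p) (N M s : ℕ) :
    ((powSumReprs p N M s).card : ℝ) ≤ 4 ^ s * reprWeight (M / p ^ N) := by
  induction N generalizing M s with
  | zero => simpa using card_powSumReprs_zero_le p M s
  | succ N ih =>
    set Q := M / p ^ N
    have hQ : M / p ^ (N + 1) = Q / p := by rw [pow_succ, Nat.div_div_eq_div_mul]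
    have hchild : ∀ j ∈ (range (Q / p + 1)).filter (· ≤ s),
        ((powSumReprs p N (M - j * p ^ (N + 1)) (s - j)).card : ℝ)
          ≤ 4 ^ s * (reprWeight (Q - j * p) * 4⁻¹ ^ j) := by
      intro j hj
      have hjs := (mem_filter.mp hj).2
      have hdiv : (M - j * p ^ (N + 1)) / p ^ N = Q - j * p := by
        rw [show j * p ^ (N + 1) = p ^ N * (j * p) by ring, Nat.sub_mul_div]
      calc _ ≤ 4 ^ (s - j) * reprWeight (Q - j * p) := hdiv ▸ ih _ _
        _ = 4 ^ s * (reprWeight (Q - j * p) * 4⁻¹ ^ j) := by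
          rw [← mul_inv_cancel_right₀ (pow_ne_zero j (four_ne_zero' ℝ)) (4 ^ (s - j)),
            ← pow_add, Nat.sub_add_cancel hjs, inv_pow]; ring
    calc ((powSumReprs p (N + 1) M s).card : ℝ)
        ≤ ∑ j ∈ (range (Q / p + 1)).filter (· ≤ s),
            ((powSumReprs p N (M - j * p ^ (N + 1)) (s - j)).card : ℝ) := by
          rw [← hQ]; exact_mod_cast card_powSumReprs_succ_le (by omega) N M s
      _ ≤ ∑ j ∈ (range (Q / p + 1)).filter (· ≤ s), 4 ^ s * (reprWeight (Q - j * p) * 4⁻¹ ^ j) :=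
          sum_le_sum hchild
      _ ≤ ∑ j ∈ range (Q / p + 1), 4 ^ s * (reprWeight (Q - j * p) * 4⁻¹ ^ j) :=
          sum_le_sum_of_subset_of_nonneg (filter_subset _ _) fun j _ _ =>
            mul_nonneg (by positivity) (mul_nonneg (reprWeight_nonneg _) (by positivity))
      _ ≤ 4 ^ s * reprWeight (M / p ^ (N + 1)) := by
          rw [← mul_sum, hQ]; gcongr; exact sum_reprWeight_le hp Q

lemma card_powSumReprs_le {p : ℕ} (hp : 2 ≤ p) (N M s : ℕ) :
    (powSumReprs p N M s).card ≤ 4 ^ s := by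
  have h := (card_powSumReprs_le_reprWeight hp N M s).trans
    (mul_le_of_le_one_right (by positivity) (reprWeight_le_one _))
  exact_mod_cast h

def solCoeffs (r : ℕ) (ab : (ℕ → ℕ) × (ℕ → ℕ)) : Fin (r + 1) → ℕ :=
  Fin.cons (ab.2 0) fun i => ab.1 i + ab.2 (i + 1)

lemma snd_le_solCoeffs {r : ℕ} (ab : (ℕ → ℕ) × (ℕ → ℕ)) (i : Fin (r + 1)) :
    ab.2 i ≤ solCoeffs r ab i := by
  cases i using Fin.cases with
  | zero => simp [solCoeffs]
  | succ i => simp [solCoeffs]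

lemma solCoeffs_mem_powSumReprs {p : ℕ} {d : ℕ → ℕ} {r m n : ℕ} {ab : (ℕ → ℕ) × (ℕ → ℕ)}
    (h : ab ∈ SolSetD p d r m n) : solCoeffs r ab ∈ powSumReprs p r m n := by
  obtain ⟨-, hb, -, hn, hm⟩ := h
  rw [mem_powSumReprs, Fin.sum_univ_succ, Fin.sum_univ_succ]
  simp only [solCoeffs, Fin.cons_zero, Fin.cons_succ, Fin.val_zero, pow_zero, mul_one,
    Fin.val_succ]
  refine ⟨by rwa [Fin.sum_univ_eq_sum_range (fun i => (ab.1 i + ab.2 (i + 1)) * p ^ (i + 1))], ?_⟩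
  have hb0 : ab.2 0 + ∑ i ∈ range r, ab.2 (i + 1) = ∑ i ∈ range r, ab.2 i := by
    rw [add_comm, ← sum_range_succ', sum_range_succ, hb r le_rfl, add_zero]
  rw [Fin.sum_univ_eq_sum_range (fun i => ab.1 i + ab.2 (i + 1)), sum_add_distrib]
  omega

def solCode (r : ℕ) (ab : (ℕ → ℕ) × (ℕ → ℕ)) : Σ _ : Fin (r + 1) → ℕ, Finset (Fin (r + 1)) :=
  ⟨solCoeffs r ab, univ.filter fun i => ab.2 i ≠ 0⟩

lemma solCode_injOn (p : ℕ) (d : ℕ → ℕ) (r m n : ℕ) :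
    Set.InjOn (solCode r) (SolSetD p d r m n) := by
  rintro x ⟨hxa, hxb, hxd, -, -⟩ y ⟨hya, hyb, hyd, -, -⟩ hxy
  simp only [solCode, Sigma.mk.inj_iff, heq_eq_eq] at hxy
  obtain ⟨hc, hF⟩ := hxy
  have hb : x.2 = y.2 := funext fun i => by
    rcases lt_or_ge i r with hi | hi
    · have := congrArg (⟨i, by omega⟩ ∈ ·) hF
      simp only [mem_filter, mem_univ, true_and, eq_iff_iff] at this
      rcases hxd i hi with h | h <;> rcases hyd i hi with h' | h' <;> simp_all
    · rw [hxb i hi, hyb i hi]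
  have ha : x.1 = y.1 := funext fun i => by
    rcases lt_or_ge i r with hi | hi
    · have := congrFun hc (Fin.succ ⟨i, hi⟩)
      simp only [solCoeffs, Fin.cons_succ, hb] at this
      omega
    · rw [hxa i hi, hya i hi]
  exact Prod.ext ha hb

theorem ncard_solSetD_le {p : ℕ} (hp : 2 ≤ p) (d : ℕ → ℕ) (r m n : ℕ) :
    (SolSetD p d r m n).ncard ≤ 8 ^ n := by
  let codes := (powSumReprs p r m n).sigma fun c => (univ.filter fun i => c i ≠ 0).powerset
  calc (SolSetD p d r m n).ncard ≤ codes.card := by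
        rw [← Set.ncard_coe_finset]
        refine Set.ncard_le_ncard_of_injOn _ (fun ab hab => ?_) (solCode_injOn p d r m n)
        simp only [solCode, codes, coe_sigma, Set.mem_sigma_iff, mem_coe, mem_powerset]
        exact ⟨solCoeffs_mem_powSumReprs hab, fun i hi => by
          simp only [mem_filter, mem_univ, true_and] at hi ⊢
          exact (Nat.pos_of_ne_zero hi).trans_le (snd_le_solCoeffs ab i) |>.ne'⟩
    _ = ∑ c ∈ powSumReprs p r m n, 2 ^ (univ.filter fun i => c i ≠ 0).card := by
        simp only [codes, card_sigma, card_powerset]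
    _ ≤ ∑ _c ∈ powSumReprs p r m n, 2 ^ n := sum_le_sum fun c hc => by
        gcongr
        · norm_num
        calc (univ.filter fun i => c i ≠ 0).card ≤ ∑ i ∈ univ.filter fun i => c i ≠ 0, c i := by
              simpa using card_nsmul_le_sum _ c 1 fun i hi =>
                Nat.one_le_iff_ne_zero.mpr (mem_filter.mp hi).2
          _ ≤ ∑ i, c i := sum_le_sum_of_subset (filter_subset _ _)
          _ ≤ n := (mem_powSumReprs.mp hc).2
    _ ≤ 4 ^ n * 2 ^ n := by
        rw [sum_const, smul_eq_mul]; gcongr; exact card_powSumReprs_le hp r m n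
    _ = 8 ^ n := by rw [← mul_pow]; norm_num

lemma two_pow_le_exp (n : ℕ) : (2 : ℝ) ^ n ≤ Real.exp (2 * Real.pi * n / Real.sqrt 3) := by
  have hsqrt : Real.sqrt 3 ≤ 2 := by
    rw [Real.sqrt_le_left (by norm_num)]; norm_num
  calc (2 : ℝ) ^ n ≤ Real.exp 1 ^ n := by
        gcongr; linarith [Real.add_one_le_exp (1 : ℝ)]
    _ = Real.exp n := Real.exp_one_pow n
    _ ≤ Real.exp (2 * Real.pi * n / Real.sqrt 3) := by
        gcongr
        rw [le_div_iff₀ (by positivity)]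
        nlinarith [Real.pi_gt_three, (Nat.cast_nonneg n : (0 : ℝ) ≤ n)]

theorem stmt13_general (p : ℕ) (hp : p.Prime) (d : ℕ → ℕ)
    (n : ℕ) (hn : 1 ≤ n) (m r : ℕ) :
    (NcardD p d r m n : ℝ) ≤ n * 4 ^ n * Real.exp (2 * Real.pi * n / Real.sqrt 3) := by
  have hcard : (NcardD p d r m n : ℝ) ≤ 8 ^ n := by
    rw [NcardD, Nat.card_coe_set_eq]
    exact_mod_cast ncard_solSetD_le hp.two_le d r m n
  calc (NcardD p d r m n : ℝ) ≤ 4 ^ n * 2 ^ n := by rw [← mul_pow]; norm_num; exact hcard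
    _ ≤ 1 * 4 ^ n * Real.exp (2 * Real.pi * n / Real.sqrt 3) := by
        rw [one_mul]; gcongr; exact two_pow_le_exp n
    _ ≤ n * 4 ^ n * Real.exp (2 * Real.pi * n / Real.sqrt 3) := by
        gcongr; exact_mod_cast hn

/-- for a prime `p`, a sequence `d` of positive integers, `n ≥ 1`,
`m ≥ 0` and `r ≥ 1`, one has `N_r^d(m,n) ≤ n · 4^n · e^{2πn/√3}`. -/
theorem stmt13 (p : ℕ) (hp : p.Prime) (d : ℕ → ℕ) (hd : ∀ i, 0 < d i)
    (n : ℕ) (hn : 1 ≤ n) (m r : ℕ) (hr : 1 ≤ r) :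
    (NcardD p d r m n : ℝ) ≤ n * 4 ^ n * Real.exp (2 * Real.pi * n / Real.sqrt 3) :=
  stmt13_general p hp d n hn m r
end

section
/- Let p be an odd prime. For all integers n ≥ 0 and m ≥ 0 there exists an integer m' ≥ 0 such that N(m,n) ≤ N(m', n+1). Consequently, the sequence (max_{m∈ℕ} N(m,n))_{n≥0} is nondecreasing in n. -/
/-!
Prepending the pair `(a, b) = (0, 1)` to a solution of the system for `(m, n)` gives a
solution for `(p m + 1, n + 1)`: it adds `1` to the left side of the first equation and
multiplies the old `p`-adic expansion by `p`. This prepending is injective, and enlarging `r`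
only adds solutions, so `N(m, n) ≤ N(p m + 1, n + 1)`.
-/

lemma finite_setOf_le_of_eq_zero (r k : ℕ) :
    {f : ℕ → ℕ | (∀ i, r ≤ i → f i = 0) ∧ ∀ i, f i ≤ k}.Finite := by
  refine (Set.finite_range fun g : Fin r → Fin (k + 1) =>
    fun i => if h : i < r then (g ⟨i, h⟩ : ℕ) else 0).subset ?_
  rintro f ⟨hzero, hle⟩
  refine ⟨fun i => ⟨f i, Nat.lt_succ_of_le (hle i)⟩, funext fun i => ?_⟩
  by_cases hi : i < r
  · simp [hi]
  · simp [hi, hzero i (not_lt.mp hi)]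

namespace SolSet

lemma finite (p r m n : ℕ) : (SolSet p r m n).Finite := by
  refine ((finite_setOf_le_of_eq_zero r n).prod (finite_setOf_le_of_eq_zero r 1)).subset ?_
  rintro ⟨a, b⟩ ⟨ha, hb, hb1, hn, -⟩
  dsimp only at ha hn
  refine ⟨⟨ha, fun i => show a i ≤ n from ?_⟩, hb, hb1⟩
  by_cases hi : i < r
  · have := Finset.single_le_sum (fun j _ => Nat.zero_le (a j)) (Finset.mem_range.mpr hi)
    omega
  · rw [ha i (not_lt.mp hi)]
    exact Nat.zero_le n

lemma mono {p r r' : ℕ} (hr : r ≤ r') (m n : ℕ) : SolSet p r m n ⊆ SolSet p r' m n := by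
  rintro ⟨a, b⟩ ⟨ha, hb, hb1, hn, hm⟩
  dsimp only at ha hb hn hm
  have extend : ∀ f : ℕ → ℕ, (∀ i, r ≤ i → f i = 0) →
      ∑ i ∈ Finset.range r', f i = ∑ i ∈ Finset.range r, f i := fun f hf =>
    (Finset.sum_subset (Finset.range_subset_range.mpr hr) fun i _ hi =>
      hf i (not_lt.mp (Finset.mem_range.not.mp hi))).symm
  refine ⟨fun i hi => ha i (hr.trans hi), fun i hi => hb i (hr.trans hi), hb1, ?_, ?_⟩
  · rwa [extend a ha, extend b hb]
  · rwa [extend _ fun i hi => by simp [ha i hi, hb (i + 1) (by omega)]]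

end SolSet

lemma Ncard_mono {r r' : ℕ} (hr : r ≤ r') (p m n : ℕ) : Ncard p r m n ≤ Ncard p r' m n :=
  Nat.card_mono (SolSet.finite p r' m n) (SolSet.mono hr m n)

def prependZeroOne (ab : (ℕ → ℕ) × (ℕ → ℕ)) : (ℕ → ℕ) × (ℕ → ℕ) :=
  (fun | 0 => 0 | i + 1 => ab.1 i, fun | 0 => 1 | i + 1 => ab.2 i)

lemma prependZeroOne_injective : Function.Injective prependZeroOne := by
  intro x y h
  exact Prod.ext (funext fun i => congrFun (congrArg Prod.fst h) (i + 1))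
    (funext fun i => congrFun (congrArg Prod.snd h) (i + 1))

lemma prependZeroOne_mem_solSet {p r m n : ℕ} {ab : (ℕ → ℕ) × (ℕ → ℕ)}
    (h : ab ∈ SolSet p r m n) : prependZeroOne ab ∈ SolSet p (r + 1) (p * m + 1) (n + 1) := by
  obtain ⟨a, b⟩ := ab
  obtain ⟨ha, hb, hb1, hn, hm⟩ := h
  dsimp only at ha hb hb1 hn hm
  refine ⟨?_, ?_, ?_, ?_, ?_⟩
  · rintro (_ | i) hi
    exacts [absurd hi (by omega), ha i (by omega)]
  · rintro (_ | i) hi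
    exacts [absurd hi (by omega), hb i (by omega)]
  · rintro (_ | i)
    exacts [le_rfl, hb1 i]
  · simp only [prependZeroOne, Finset.sum_range_succ']
    omega
  · simp only [prependZeroOne, Finset.sum_range_succ', ← hm, mul_add, Finset.mul_sum]
    rw [Finset.sum_congr rfl fun i _ => (by ring :
      (a i + b (i + 1)) * p ^ (i + 1 + 1) = p * ((a i + b (i + 1)) * p ^ (i + 1)))]
    ring

lemma Ncard_le_Ncard_mul_add_one (p r m n : ℕ) :
    Ncard p r m n ≤ Ncard p (r + 1) (p * m + 1) (n + 1) :=
  have := (SolSet.finite p (r + 1) (p * m + 1) (n + 1)).to_subtype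
  Nat.card_le_card_of_injective
    (fun x : SolSet p r m n => ⟨prependZeroOne x.1, prependZeroOne_mem_solSet x.2⟩)
    fun _ _ h => Subtype.ext (prependZeroOne_injective (congrArg Subtype.val h))

theorem stmt15_general (p : ℕ) (hp : p.Prime) (n m : ℕ) :
    ∃ m' : ℕ, Nstab p (m : ℤ) (n : ℤ) ≤ Nstab p (m' : ℤ) ((n : ℤ) + 1) := by
  refine ⟨p * m + 1, ?_⟩
  have hrank : m + 1 + 1 ≤ p * m + 1 + 1 := by
    have := Nat.le_mul_of_pos_left m hp.pos
    omega
  simp only [Nstab, Int.toNat_natCast, Int.natCast_nonneg, and_self, if_true,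
    ← Nat.cast_add_one]
  exact (Ncard_le_Ncard_mul_add_one p (m + 1) m n).trans (Ncard_mono hrank p _ _)

/-- for an odd prime `p`, every value `N(m,n)` is dominated by some
value `N(m', n+1)`; hence the sequence of maxima `(max_m N(m,n))_n` is nondecreasing. -/
theorem stmt15 (p : ℕ) (hp : p.Prime) (hodd : Odd p) (n m : ℕ) :
    ∃ m' : ℕ, Nstab p (m : ℤ) (n : ℤ) ≤ Nstab p (m' : ℤ) ((n : ℤ) + 1) :=
  stmt15_general p hp n m
end
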